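/- Let 𝕋 be a time scale, f, g : 𝕋 → ℝ, t ∈ 𝕋^κ, and α ∈ (0,1]. Assume f and g are continuous at t (as functions on 𝕋), g(t)·g(σ(t)) ≠ 0, g(s) ≠ 0 for all s ∈ 𝕋, L_f is a fractional derivative of f of order α at t, and L_g is a fractional derivative of g of order α at t. Then (L_f·g(t) − f(t)·L_g)/(g(t)·g(σ(t))) is a fractional derivative of the quotient f/g of order α at t. -/

import Mathlib

open Real Set Classical

/-- Forward jump operator of a time scale, with the convention `σ t = t`
when `{s ∈ T | t < s}` is empty. -/
noncomputable def tsSigma (T : Set ℝ) (t : ℝ) : ℝ :=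
  if ({s | s ∈ T ∧ t < s}).Nonempty then sInf {s | s ∈ T ∧ t < s} else t

/-- Graininess function `μ t = σ t - t`. -/
noncomputable def tsMu (T : Set ℝ) (t : ℝ) : ℝ :=
  tsSigma T t - t

/-- Backward jump operator, with the convention `ρ t = t`
when `{s ∈ T | s < t}` is empty. -/
noncomputable def tsRho (T : Set ℝ) (t : ℝ) : ℝ :=
  if ({s | s ∈ T ∧ s < t}).Nonempty then sSup {s | s ∈ T ∧ s < t} else t

/-- `T^κ`: `T` with its maximum removed if the maximum exists and is
left-scattered; `T` otherwise. -/
def tsKappa (T : Set ℝ) : Set ℝ :=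
  {t | t ∈ T ∧ ¬ (IsGreatest T t ∧ tsRho T t < t)}

/-- `t` is right-scattered when `σ t > t`. -/
def RightScattered (T : Set ℝ) (t : ℝ) : Prop :=
  t < tsSigma T t

/-- `t` is right-dense when `t < sup T` and `σ t = t`. -/
def RightDense (T : Set ℝ) (t : ℝ) : Prop :=
  (∃ s ∈ T, t < s) ∧ tsSigma T t = t

/-- Signed real power `x^α = sign(x) · |x|^α` (agrees with `rpow` for `x ≥ 0`). -/
noncomputable def fpow (α x : ℝ) : ℝ := Real.sign x * |x| ^ α

/-- `α = 1/q` for some odd natural number `q`. -/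
def IsOddRecip (α : ℝ) : Prop := ∃ q : ℕ, Odd q ∧ α = 1 / (q : ℝ)

/-- `L` is a fractional derivative of `f` of order `α` at `t` on the time scale `T`. -/
def FracDerivAt (T : Set ℝ) (f : ℝ → ℝ) (α t L : ℝ) : Prop :=
  (IsOddRecip α →
    ∀ ε > (0:ℝ), ∃ δ > (0:ℝ), ∀ s ∈ T, |t - s| < δ →
      |(f (tsSigma T t) - f s) - L * fpow α (tsSigma T t - s)|
        ≤ ε * |tsSigma T t - s| ^ α) ∧
  (¬ IsOddRecip α →
    ∀ ε > (0:ℝ), ∃ δ > (0:ℝ), ∀ s ∈ T, t - δ < s → s < t →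
      |(f (tsSigma T t) - f s) - L * fpow α (tsSigma T t - s)|
        ≤ ε * |tsSigma T t - s| ^ α)

/-- Continuity at `t` of `f` as a function on the time scale `T`. -/
def ContinuousAtTS (T : Set ℝ) (f : ℝ → ℝ) (t : ℝ) : Prop :=
  ∀ ε > (0:ℝ), ∃ δ > (0:ℝ), ∀ s ∈ T, |t - s| < δ → |f t - f s| ≤ ε

/-! Both clauses of `FracDerivAt` say that the remainder
`A(s) = f(σ t) - f(s) - L_f · (σ t - s)^α` is `o(|σ t - s|^α)` along `𝓝[T] t`, resp. along
`𝓝[T ∩ Iio t] t`. With `B` the remainder of `g` and `q = f / g`, the remainder of `q` is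
`(A - q(s) B) / g(σ t) + (q(t) - q(s)) L_g / g(σ t) · (σ t - s)^α`. Since `q` is continuous at `t`,
`q(s)` stays bounded and `q(t) - q(s) → 0`, while `|(σ t - s)^α| ≤ |σ t - s|^α`; hence both
terms are `o(|σ t - s|^α)`. -/

open Filter Topology Asymptotics

lemma abs_fpow_le (α x : ℝ) : |fpow α x| ≤ |x| ^ α := by
  have hsign : |Real.sign x| ≤ 1 := by
    rcases Real.sign_apply_eq x with h | h | h <;> simp [h]
  have hpow : 0 ≤ |x| ^ α := by positivity
  rw [fpow, abs_mul, abs_of_nonneg hpow]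
  exact mul_le_of_le_one_left hpow hsign

lemma isBigO_fpow {β : Type*} (l : Filter β) (α : ℝ) (u : β → ℝ) :
    (fun s => fpow α (u s)) =O[l] fun s => |u s| ^ α :=
  isBigO_of_le l fun s => by
    simpa only [Real.norm_eq_abs, abs_of_nonneg (by positivity : 0 ≤ |u s| ^ α)]
      using abs_fpow_le α (u s)

lemma ContinuousAtTS.tendsto {T : Set ℝ} {f : ℝ → ℝ} {t : ℝ} (h : ContinuousAtTS T f t) :
    Tendsto f (𝓝[T] t) (𝓝 (f t)) := by
  refine Metric.tendsto_nhdsWithin_nhds.2 fun ε hε => ?_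
  obtain ⟨δ, hδ, H⟩ := h (ε / 2) (half_pos hε)
  refine ⟨δ, hδ, fun s hs hst => ?_⟩
  rw [Real.dist_eq, abs_sub_comm] at hst ⊢
  exact (H s hs hst).trans_lt (half_lt_self hε)

lemma isLittleO_nhdsWithin_iff {φ ψ : ℝ → ℝ} {S : Set ℝ} {t : ℝ} (hψ : ∀ s, 0 ≤ ψ s) :
    φ =o[𝓝[S] t] ψ ↔ ∀ ε > (0:ℝ), ∃ δ > (0:ℝ), ∀ s ∈ S, |t - s| < δ → |φ s| ≤ ε * ψ s := by
  simp only [isLittleO_iff, Filter.Eventually, Metric.mem_nhdsWithin_iff, Set.subset_def,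
    Set.mem_inter_iff, Metric.mem_ball, Real.dist_eq, abs_sub_comm _ t, Real.norm_eq_abs,
    abs_of_nonneg (hψ _)]
  exact forall₂_congr fun ε _ => exists_congr fun δ => and_congr_right fun _ =>
    ⟨fun h s hs hst => h s ⟨hst, hs⟩, fun h s hs => h s hs.2 hs.1⟩

noncomputable def fracRemainder (T : Set ℝ) (f : ℝ → ℝ) (α t L s : ℝ) : ℝ :=
  f (tsSigma T t) - f s - L * fpow α (tsSigma T t - s)

lemma fracDerivAt_iff_isLittleO {T : Set ℝ} {f : ℝ → ℝ} {α t L : ℝ} :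
    FracDerivAt T f α t L ↔
      (IsOddRecip α →
        fracRemainder T f α t L =o[𝓝[T] t] fun s => |tsSigma T t - s| ^ α) ∧
      (¬ IsOddRecip α →
        fracRemainder T f α t L =o[𝓝[T ∩ Iio t] t] fun s => |tsSigma T t - s| ^ α) := by
  have hψ : ∀ s, 0 ≤ |tsSigma T t - s| ^ α := fun s => by positivity
  rw [isLittleO_nhdsWithin_iff hψ, isLittleO_nhdsWithin_iff hψ]
  refine and_congr Iff.rfl (imp_congr_right fun _ => forall₂_congr fun ε _ =>
    exists_congr fun δ => and_congr_right fun _ => ⟨fun h s hs hts => ?_, fun h s hs hδs hst => ?_⟩)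
  · rw [abs_of_pos (sub_pos.2 hs.2)] at hts
    exact h s hs.1 (by linarith) hs.2
  · exact h s ⟨hs, hst⟩ (by rw [abs_of_pos (sub_pos.2 hst)]; linarith)

lemma isLittleO_div_remainder {β : Type*} {l : Filter β} {f g w P : β → ℝ} {a b Lf Lg q : ℝ}
    (hf : (fun s => a - f s - Lf * w s) =o[l] P) (hg : (fun s => b - g s - Lg * w s) =o[l] P)
    (hw : w =O[l] P) (hq : Tendsto (fun s => f s / g s) l (𝓝 q))
    (hb : b ≠ 0) (hg0 : ∀ᶠ s in l, g s ≠ 0) :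
    (fun s => a / b - f s / g s - (Lf - q * Lg) / b * w s) =o[l] P := by
  have hB : (fun s => f s / g s * (b - g s - Lg * w s)) =o[l] P := by
    simpa only [one_mul] using hq.isBigO_one ℝ |>.mul_isLittleO hg
  have hq' : (fun s => q - f s / g s) =o[l] fun _ => (1 : ℝ) := by
    rw [isLittleO_one_iff]
    simpa only [sub_self] using hq.const_sub q
  have hW : (fun s => (q - f s / g s) * w s) =o[l] P := by
    simpa only [one_mul] using hq'.mul_isBigO hw
  refine (((hf.sub hB).const_mul_left b⁻¹).add (hW.const_mul_left (Lg / b))).congr' ?_ .rfl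
  filter_upwards [hg0] with s hs
  field_simp
  ring

lemma isLittleO_fracRemainder_div {T : Set ℝ} {f g : ℝ → ℝ} {α t Lf Lg : ℝ}
    {l : Filter ℝ} (hl : l ≤ 𝓝[T] t)
    (hfc : ContinuousAtTS T f t) (hgc : ContinuousAtTS T g t)
    (hne : g t * g (tsSigma T t) ≠ 0) (hnz : ∀ s ∈ T, g s ≠ 0)
    (hf : fracRemainder T f α t Lf =o[l] fun s => |tsSigma T t - s| ^ α)
    (hg : fracRemainder T g α t Lg =o[l] fun s => |tsSigma T t - s| ^ α) :
    fracRemainder T (fun s => f s / g s) α t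
        ((Lf * g t - f t * Lg) / (g t * g (tsSigma T t))) =o[l]
      fun s => |tsSigma T t - s| ^ α := by
  obtain ⟨hgt, hgσ⟩ := mul_ne_zero_iff.mp hne
  have hL : (Lf * g t - f t * Lg) / (g t * g (tsSigma T t))
      = (Lf - f t / g t * Lg) / g (tsSigma T t) := by
    field_simp
  rw [hL]
  exact isLittleO_div_remainder hf hg (isBigO_fpow l α _)
    ((hfc.tendsto.div hgc.tendsto hgt).mono_left hl) hgσ
    ((eventually_nhdsWithin_of_forall hnz).filter_mono hl)

theorem fracDeriv_div_general
    (T : Set ℝ)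
    (f g : ℝ → ℝ) (t : ℝ)
    (α : ℝ) (Lf Lg : ℝ)
    (hfc : ContinuousAtTS T f t) (hgc : ContinuousAtTS T g t)
    (hne : g t * g (tsSigma T t) ≠ 0)
    (hnz : ∀ s ∈ T, g s ≠ 0)
    (hf : FracDerivAt T f α t Lf) (hg : FracDerivAt T g α t Lg) :
    FracDerivAt T (fun s => f s / g s) α t
      ((Lf * g t - f t * Lg) / (g t * g (tsSigma T t))) := by
  rw [fracDerivAt_iff_isLittleO] at hf hg ⊢
  exact ⟨fun h => isLittleO_fracRemainder_div le_rfl hfc hgc hne hnz (hf.1 h) (hg.1 h),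
    fun h => isLittleO_fracRemainder_div (nhdsWithin_mono _ inter_subset_left) hfc hgc hne hnz
      (hf.2 h) (hg.2 h)⟩

/-- Quotient rule: if `f`, `g` are continuous at `t`, `g(t)·g(σ t) ≠ 0`, `g` is
nowhere zero on `T`, and `L_f`, `L_g` are fractional derivatives of `f`, `g` of
order `α` at `t`, then `(L_f·g(t) - f(t)·L_g)/(g(t)·g(σ t))` is a fractional
derivative of `f/g` of order `α` at `t`. -/
theorem fracDeriv_div
    (T : Set ℝ) (hT : T.Nonempty) (hTc : IsClosed T)
    (f g : ℝ → ℝ) (t : ℝ) (ht : t ∈ tsKappa T)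
    (α : ℝ) (hα : α ∈ Set.Ioc (0:ℝ) 1) (Lf Lg : ℝ)
    (hfc : ContinuousAtTS T f t) (hgc : ContinuousAtTS T g t)
    (hne : g t * g (tsSigma T t) ≠ 0)
    (hnz : ∀ s ∈ T, g s ≠ 0)
    (hf : FracDerivAt T f α t Lf) (hg : FracDerivAt T g α t Lg) :
    FracDerivAt T (fun s => f s / g s) α t
      ((Lf * g t - f t * Lg) / (g t * g (tsSigma T t))) :=
  fracDeriv_div_general T f g t α Lf Lg hfc hgc hne hnz hf hg
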